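/- Let Q₊ = |0⟩⟨00| + |1⟩⟨11| and Q₋ = |0⟩⟨00| − |1⟩⟨11| be 2×4 complex matrices, and let A = Q₊⊗Q₊⊗Q₊ + Q₊⊗Q₋⊗Q₋ + Q₋⊗Q₊⊗Q₋ + Q₋⊗Q₋⊗Q₊ (an 8×64 matrix acting on vectors indexed by ({0,1}²)³). Let |G₀⁺⟩ = (|000⟩+|111⟩)/√2 and |G₀⁻⟩ = (|000⟩−|111⟩)/√2 in ℂ⁸, and for vectors g, h ∈ ℂ⁸ let interleave(g,h) ∈ ℂ⁶⁴ be defined by interleave(g,h)((a₁,a₂),(b₁,b₂),(c₁,c₂)) = g(a₁,b₁,c₁)·h(a₂,b₂,c₂). Then A·interleave(G₀⁺, G₀⁺) = 2√2·|G₀⁺⟩ and A·interleave(G₀⁺, G₀⁻) = 2√2·|G₀⁻⟩. -/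
import Mathlib


open Matrix BigOperators Kronecker

noncomputable section

/-- `Q₊ = |0⟩⟨00| + |1⟩⟨11|`. -/
def Qplus : Matrix (Fin 2) (Fin 2 × Fin 2) ℂ :=
  Matrix.of fun i jk =>
    if i = 0 ∧ jk = (0, 0) then 1 else if i = 1 ∧ jk = (1, 1) then 1 else 0

/-- `Q₋ = |0⟩⟨00| - |1⟩⟨11|`. -/
def Qminus : Matrix (Fin 2) (Fin 2 × Fin 2) ℂ :=
  Matrix.of fun i jk =>
    if i = 0 ∧ jk = (0, 0) then 1 else if i = 1 ∧ jk = (1, 1) then -1 else 0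

/-- The GHZ vector `|G₀⁺⟩ = (|000⟩ + |111⟩)/√2`. -/
def G0p : (Fin 2 × Fin 2 × Fin 2) → ℂ := fun x =>
  ((if x = (0, 0, 0) then 1 else 0) + (if x = (1, 1, 1) then 1 else 0)) / (Real.sqrt 2 : ℂ)

/-- The GHZ vector `|G₀⁻⟩ = (|000⟩ - |111⟩)/√2`. -/
def G0m : (Fin 2 × Fin 2 × Fin 2) → ℂ := fun x =>
  ((if x = (0, 0, 0) then 1 else 0) - (if x = (1, 1, 1) then 1 else 0)) / (Real.sqrt 2 : ℂ)

/-- The interleaved product state of two tripartite vectors. -/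
def interleave (g h : (Fin 2 × Fin 2 × Fin 2) → ℂ) :
    (Fin 2 × Fin 2) × (Fin 2 × Fin 2) × (Fin 2 × Fin 2) → ℂ :=
  fun x => g (x.1.1, x.2.1.1, x.2.2.1) * h (x.1.2, x.2.1.2, x.2.2.2)

set_option maxHeartbeats 2000000 in
/-- The even-parity post-selection operator `A` of the PBS distillation protocol maps
`|G₀⁺⟩ ⊗ |G₀⁺⟩` to `2√2 |G₀⁺⟩` and `|G₀⁺⟩ ⊗ |G₀⁻⟩` to `2√2 |G₀⁻⟩`. -/
theorem distillation_postselection_action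
    (A : Matrix (Fin 2 × Fin 2 × Fin 2)
        ((Fin 2 × Fin 2) × (Fin 2 × Fin 2) × (Fin 2 × Fin 2)) ℂ)
    (hA : A = Qplus ⊗ₖ (Qplus ⊗ₖ Qplus) + Qplus ⊗ₖ (Qminus ⊗ₖ Qminus)
        + Qminus ⊗ₖ (Qplus ⊗ₖ Qminus) + Qminus ⊗ₖ (Qminus ⊗ₖ Qplus)) :
    A.mulVec (interleave G0p G0p) = ((2 * Real.sqrt 2 : ℝ) : ℂ) • G0p ∧
    A.mulVec (interleave G0p G0m) = ((2 * Real.sqrt 2 : ℝ) : ℂ) • G0m := by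
  subst hA
  have h2 : (Real.sqrt 2 : ℂ) * (Real.sqrt 2 : ℂ) = 2 := by
    rw [← Complex.ofReal_mul, Real.mul_self_sqrt (by norm_num : (0:ℝ) ≤ 2)]
    norm_num
  have hne : (Real.sqrt 2 : ℂ) ≠ 0 := by
    simp only [ne_eq, Complex.ofReal_eq_zero]
    positivity
  have hinv : (Real.sqrt 2 : ℂ)⁻¹ = (Real.sqrt 2 : ℂ) / 2 := by
    field_simp
    linear_combination -h2
  have hsq : (Real.sqrt 2 : ℂ) ^ 2 = 2 := by rw [sq]; exact h2
  have hs3 : (Real.sqrt 2 : ℂ) ^ 3 = 2 * (Real.sqrt 2 : ℂ) := by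
    rw [pow_succ, hsq]
  constructor <;>
  · funext x
    obtain ⟨a, b, c⟩ := x
    simp only [Matrix.mulVec, dotProduct, Matrix.add_apply, Matrix.kroneckerMap_apply,
      Qplus, Qminus, G0p, G0m, interleave, Matrix.of_apply, Fintype.sum_prod_type,
      Fin.sum_univ_two, Pi.smul_apply, smul_eq_mul, Prod.mk.injEq, Complex.ofReal_mul,
      Complex.ofReal_ofNat, div_eq_mul_inv, hinv]
    fin_cases a <;> fin_cases b <;> fin_cases c <;>
      · norm_num
        try ring
        try ring_nf
        try simp only [hsq, hs3]
        try norm_num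
        try ring
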